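/- arXiv:2208.03579 — 5 statements merged into one kernel-verified Lean document; each statement's English description precedes it below -/
import Mathlib

section
/- Let X be an infinite set. There exists an injective map μ : X → X such that for every injective map σ : X → X there exist a subset A ⊆ X and a bijection π : X ≃ A with μ[A] ⊆ A and σ = π⁻¹ ∘ μ ∘ π (i.e., for all x ∈ X, μ(π(x)) = π(σ(x))). -/
open Function

namespace Stmt0Aux

variable {X : Type*}

/-- The target space: lines plus cycles of every length. -/
abbrev Yt (X : Type*) := (X × ℤ) ⊕ (ℕ × X × ℕ)

def mu0 : Yt X → Yt X
  | .inl (x, k) => .inl (x, k + 1)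
  | .inr (p, x, i) => .inr (p, x, if i + 1 = p then 0 else i + 1)

lemma mu0_injective : Injective (mu0 : Yt X → Yt X) := by
  rintro (⟨x, k⟩ | ⟨p, x, i⟩) (⟨y, l⟩ | ⟨q, y, j⟩) h <;> simp [mu0] at h ⊢
  · exact ⟨h.1, by omega⟩
  · refine ⟨h.1, h.2.1, ?_⟩
    rcases h with ⟨rfl, rfl, h⟩
    split_ifs at h <;> omega

lemma yt_equiv (X : Type*) [Infinite X] : Nonempty (Yt X ≃ X) := by
  rw [← Cardinal.eq]
  have h1 : Cardinal.mk (X × ℤ) = Cardinal.mk X := by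
    simp [Cardinal.mk_prod, Cardinal.mk_int, Cardinal.mul_aleph0_eq (Cardinal.aleph0_le_mk X)]
  have h2 : Cardinal.mk (ℕ × X × ℕ) = Cardinal.mk X := by
    simp [Cardinal.mk_prod, Cardinal.mk_nat, Cardinal.mul_aleph0_eq (Cardinal.aleph0_le_mk X),
      Cardinal.aleph0_mul_eq (Cardinal.aleph0_le_mk X)]
  simp [Cardinal.mk_sum, h1, h2, Cardinal.add_eq_self (Cardinal.aleph0_le_mk X)]

/-- Two points are related if their forward orbits meet. -/
def RelS (σ : X → X) : Setoid X :=
  ⟨fun x y => ∃ m n : ℕ, σ^[m] x = σ^[n] y, by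
    constructor
    · exact fun x => ⟨0, 0, rfl⟩
    · rintro x y ⟨m, n, h⟩; exact ⟨n, m, h.symm⟩
    · rintro x y z ⟨m, n, h1⟩ ⟨p, q, h2⟩
      refine ⟨p + m, n + q, ?_⟩
      calc σ^[p + m] x = σ^[p] (σ^[m] x) := iterate_add_apply σ p m x
        _ = σ^[p] (σ^[n] y) := by rw [h1]
        _ = σ^[p + n] y := (iterate_add_apply σ p n y).symm
        _ = σ^[n + p] y := by rw [Nat.add_comm]
        _ = σ^[n] (σ^[p] y) := iterate_add_apply σ n p y
        _ = σ^[n] (σ^[q] z) := by rw [h2]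
        _ = σ^[n + q] z := (iterate_add_apply σ n q z).symm⟩

variable (σ : X → X)

lemma rel_out (x : X) : ∃ m n : ℕ, σ^[m] x = σ^[n] (Quotient.out (Quotient.mk (RelS σ) x)) :=
  Quotient.exact (Quotient.out_eq (Quotient.mk (RelS σ) x)).symm

lemma mk_apply (x : X) :
    Quotient.mk (RelS σ) (σ x) = Quotient.mk (RelS σ) x :=
  Quotient.sound ⟨0, 1, by simp⟩

/-- A class is periodic if it contains a periodic point. -/
def Per (q : Quotient (RelS σ)) : Prop :=
  ∃ c k, Quotient.mk (RelS σ) c = q ∧ 0 < k ∧ σ^[k] c = c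

variable {σ}

lemma exp_inj (hσ : Injective σ) {r : X} (hnp : ∀ k > 0, σ^[k] r ≠ r) {a b : ℕ}
    (h : σ^[a] r = σ^[b] r) : a = b := by
  rcases Nat.le_total a b with hab | hab
  · have h2 : σ^[a] (σ^[b - a] r) = σ^[a] r := by
      rw [← iterate_add_apply, Nat.add_sub_cancel' hab, h]
    have := hσ.iterate a h2
    by_contra hne
    exact hnp (b - a) (by omega) this
  · have h2 : σ^[b] (σ^[a - b] r) = σ^[b] r := by
      rw [← iterate_add_apply, Nat.add_sub_cancel' hab, ← h]
    have := hσ.iterate b h2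
    by_contra hne
    exact hnp (a - b) (by omega) this

lemma iter_eq_iff_mod (hσ : Injective σ) {c : X} (hp : 0 < minimalPeriod σ c) (a b : ℕ) :
    σ^[a] c = σ^[b] c ↔ a % minimalPeriod σ c = b % minimalPeriod σ c := by
  constructor
  · intro h
    rcases Nat.le_total a b with hab | hab
    · have h2 : σ^[a] (σ^[b - a] c) = σ^[a] c := by
        rw [← iterate_add_apply, Nat.add_sub_cancel' hab, h]
      have h3 : IsPeriodicPt σ (b - a) c := hσ.iterate a h2
      rcases Nat.eq_or_lt_of_le hab with rfl | hlt
      · simp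
      · obtain ⟨t, ht⟩ := h3.minimalPeriod_dvd
        have : b = a + minimalPeriod σ c * t := by omega
        rw [this, Nat.mul_comm, Nat.add_mul_mod_self_right]
    · have h2 : σ^[b] (σ^[a - b] c) = σ^[b] c := by
        rw [← iterate_add_apply, Nat.add_sub_cancel' hab, ← h]
      have h3 : IsPeriodicPt σ (a - b) c := hσ.iterate b h2
      rcases Nat.eq_or_lt_of_le hab with rfl | hlt
      · simp
      · obtain ⟨t, ht⟩ := h3.minimalPeriod_dvd
        have : a = b + minimalPeriod σ c * t := by omega
        rw [this, Nat.mul_comm, Nat.add_mul_mod_self_right]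
  · intro h
    rw [← iterate_mod_minimalPeriod_eq (n := a), ← iterate_mod_minimalPeriod_eq (n := b), h]

lemma orbit_eq_iterate (hσ : Injective σ) {c x : X} (hp : 0 < minimalPeriod σ c)
    (hrel : ∃ m n : ℕ, σ^[m] x = σ^[n] c) : ∃ k, x = σ^[k] c := by
  obtain ⟨m, n, hmn⟩ := hrel
  set p := minimalPeriod σ c with hpdef
  have hper : σ^[p * m] c = c := (isPeriodicPt_minimalPeriod σ c).mul_const m
  have hge : m ≤ n + p * m := by nlinarith
  refine ⟨n + p * m - m, hσ.iterate m ?_⟩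
  rw [← iterate_add_apply, Nat.add_sub_cancel' hge, iterate_add_apply, hper, hmn]

lemma mod_succ_eq (p a : ℕ) (hp : 0 < p) :
    (a + 1) % p = if a % p + 1 = p then 0 else a % p + 1 := by
  have h1 : (a + 1) % p = (a % p + 1) % p := (Nat.mod_add_mod a p 1).symm
  have h2 : a % p < p := Nat.mod_lt a hp
  split_ifs with h
  · rw [h1, h, Nat.mod_self]
  · rw [h1, Nat.mod_eq_of_lt (by omega)]

lemma key (hσ : Injective σ) : ∃ ρ : X → Yt X, Injective ρ ∧ ∀ x, mu0 (ρ x) = ρ (σ x) := by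
  classical
  set mk : X → Quotient (RelS σ) := Quotient.mk (RelS σ) with hmk
  -- choose a periodic point in each periodic class
  have hcex : ∀ q : Quotient (RelS σ), ∃ cq : X,
      Per σ q → mk cq = q ∧ 0 < minimalPeriod σ cq := by
    intro q
    by_cases h : Per σ q
    · obtain ⟨c, k, h1, h2, h3⟩ := h
      exact ⟨c, fun _ => ⟨h1, IsPeriodicPt.minimalPeriod_pos h2 h3⟩⟩
    · exact ⟨q.out, fun h' => absurd h' h⟩
  choose c hc using hcex
  -- in periodic classes, every point is an iterate of the chosen point
  have hκex : ∀ x : X, ∃ k : ℕ, Per σ (mk x) → x = σ^[k] (c (mk x)) := by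
    intro x
    by_cases h : Per σ (mk x)
    · obtain ⟨h1, h2⟩ := hc (mk x) h
      have hrel : ∃ m n : ℕ, σ^[m] x = σ^[n] (c (mk x)) := Quotient.exact (h1.symm : mk x = _)
      obtain ⟨k, hk⟩ := orbit_eq_iterate hσ h2 hrel
      exact ⟨k, fun _ => hk⟩
    · exact ⟨0, fun h' => absurd h' h⟩
  choose κ hκ using hκex
  -- witnesses relating each point to the representative of its class
  have hwex : ∀ x : X, ∃ mn : ℕ × ℕ, σ^[mn.1] x = σ^[mn.2] (Quotient.out (mk x)) := by
    intro x
    obtain ⟨m, n, h⟩ := rel_out σ x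
    exact ⟨(m, n), h⟩
  choose w hw using hwex
  -- nonperiodic classes have a representative with no cycles
  have hout : ∀ x : X, ¬ Per σ (mk x) → ∀ k > 0, σ^[k] (Quotient.out (mk x)) ≠ Quotient.out (mk x) := by
    intro x hnp k hk hcyc
    exact hnp ⟨Quotient.out (mk x), k, Quotient.out_eq _, hk, hcyc⟩
  refine ⟨fun x => if Per σ (mk x) then
      .inr (minimalPeriod σ (c (mk x)), Quotient.out (mk x), κ x % minimalPeriod σ (c (mk x)))
    else .inl (Quotient.out (mk x), (↑(w x).2 : ℤ) - ↑(w x).1), ?_, ?_⟩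
  · intro x y hxy
    by_cases hx : Per σ (mk x) <;> by_cases hy : Per σ (mk y) <;>
      simp only [hx, hy, if_pos, if_neg, if_true, if_false, not_false_iff] at hxy
    · rw [Sum.inr.injEq, Prod.mk.injEq, Prod.mk.injEq] at hxy
      obtain ⟨hP, hO, hK⟩ := hxy
      have hq : mk x = mk y := Quotient.out_injective hO
      obtain ⟨h1, h2⟩ := hc (mk y) hy
      have hkx : x = σ^[κ x] (c (mk y)) := by
        have := hκ x hx; rwa [hq] at this
      have hky : y = σ^[κ y] (c (mk y)) := hκ y hy
      rw [hq] at hK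
      exact hkx.trans (((iter_eq_iff_mod hσ h2 _ _).2 hK).trans hky.symm)
    · exact absurd hxy (by simp)
    · exact absurd hxy (by simp)
    · rw [Sum.inl.injEq, Prod.mk.injEq] at hxy
      obtain ⟨hO, hV⟩ := hxy
      have hq : mk x = mk y := Quotient.out_injective hO
      have hwx := hw x
      have hwy := hw y
      rw [hq] at hwx
      set r := Quotient.out (mk y)
      have e1 : σ^[(w y).1 + (w x).1] x = σ^[(w y).1 + (w x).2] r := by
        rw [iterate_add_apply, hwx, ← iterate_add_apply]
      have e2 : σ^[(w x).1 + (w y).1] y = σ^[(w x).1 + (w y).2] r := by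
        rw [iterate_add_apply, hwy, ← iterate_add_apply]
      have hsum : (w y).1 + (w x).2 = (w x).1 + (w y).2 := by omega
      have e3 : σ^[(w y).1 + (w x).1] x = σ^[(w y).1 + (w x).1] y := by
        rw [e1, hsum, ← e2, Nat.add_comm]
      exact hσ.iterate _ e3
  · intro x
    have hq : mk (σ x) = mk x := mk_apply σ x
    by_cases h : Per σ (mk x)
    · have h' : Per σ (mk (σ x)) := by rw [hq]; exact h
      simp only [h, h', if_true, if_pos, hq]
      obtain ⟨h1, h2⟩ := hc (mk x) h
      have hkx : x = σ^[κ x] (c (mk x)) := hκ x h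
      have hksx : σ x = σ^[κ (σ x)] (c (mk x)) := by
        have := hκ (σ x) h'; rwa [hq] at this
      have hstep : σ x = σ^[κ x + 1] (c (mk x)) := by
        rw [iterate_succ_apply', ← hkx]
      have hmod : κ (σ x) % minimalPeriod σ (c (mk x)) =
          (κ x + 1) % minimalPeriod σ (c (mk x)) :=
        (iter_eq_iff_mod hσ h2 _ _).1 (hksx.symm.trans hstep)
      simp only [mu0]
      rw [hmod, mod_succ_eq _ _ h2]
    · have h' : ¬ Per σ (mk (σ x)) := by rw [hq]; exact h
      simp only [h, h', if_false, if_neg, not_false_iff, hq]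
      simp only [mu0]
      have hwx := hw x
      have hwsx := hw (σ x)
      rw [hq] at hwsx
      set r := Quotient.out (mk x)
      -- σ^[(w (σ x)).1 + 1] x = σ^[(w (σ x)).2] r
      have e1 : σ^[(w (σ x)).1 + 1] x = σ^[(w (σ x)).2] r := by
        rw [iterate_add_apply, iterate_one, hwsx]
      have e2 : σ^[(w x).1 + ((w (σ x)).1 + 1)] x = σ^[(w x).1 + (w (σ x)).2] r := by
        rw [iterate_add_apply, e1, ← iterate_add_apply]
      have e3 : σ^[((w (σ x)).1 + 1) + (w x).1] x = σ^[((w (σ x)).1 + 1) + (w x).2] r := by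
        rw [iterate_add_apply, hw x, ← iterate_add_apply]
      have e2' : σ^[((w (σ x)).1 + 1) + (w x).1] x = σ^[(w x).1 + (w (σ x)).2] r := by
        rw [show ((w (σ x)).1 + 1) + (w x).1 = (w x).1 + ((w (σ x)).1 + 1) from by omega]
        exact e2
      have e4 : σ^[(w x).1 + (w (σ x)).2] r = σ^[((w (σ x)).1 + 1) + (w x).2] r :=
        e2'.symm.trans e3
      have e5 : (w x).1 + (w (σ x)).2 = ((w (σ x)).1 + 1) + (w x).2 :=
        exp_inj hσ (hout x h) e4
      have : ((w x).2 : ℤ) - (w x).1 + 1 = ((w (σ x)).2 : ℤ) - (w (σ x)).1 := by omega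
      rw [this]

end Stmt0Aux

theorem stmt0 (X : Type*) [Infinite X] :
    ∃ μ : X → X, Function.Injective μ ∧
      ∀ σ : X → X, Function.Injective σ →
        ∃ (A : Set X) (π : X ≃ A),
          (∀ a ∈ A, μ a ∈ A) ∧ ∀ x : X, μ (π x : X) = (π (σ x) : X) := by
  classical
  obtain ⟨e⟩ := Stmt0Aux.yt_equiv X
  refine ⟨fun x => e (Stmt0Aux.mu0 (e.symm x)),
    e.injective.comp (Stmt0Aux.mu0_injective.comp e.symm.injective), ?_⟩
  intro σ hσ
  obtain ⟨ρ, hρinj, hρ⟩ := Stmt0Aux.key hσ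
  refine ⟨Set.range (fun x => e (ρ x)),
    Equiv.ofInjective _ (e.injective.comp hρinj), ?_, ?_⟩
  · rintro a ⟨x, rfl⟩
    refine ⟨σ x, ?_⟩
    simp [hρ x]
  · intro x
    simp [Equiv.ofInjective, hρ x]
end

section
/- Let D be a nonempty set, let X be a set with |X| ≥ max(|D|, ℵ₀), and let f : D → D be any function. Then there exists a surjection z : X → D (an enumeration in which every element of D appears infinitely often, i.e., every fiber z⁻¹(d) is infinite) and an injection σ : X → X such that f(z(x)) = z(σ(x)) for all x ∈ X. -/
theorem stmt4 (D X : Type u) [Nonempty D]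
    (h₁ : Cardinal.mk D ≤ Cardinal.mk X) (h₂ : Cardinal.aleph0 ≤ Cardinal.mk X)
    (f : D → D) :
    ∃ (z : X → D) (σ : X → X),
      Function.Surjective z ∧ (∀ d : D, (z ⁻¹' {d}).Infinite) ∧
      Function.Injective σ ∧ ∀ x : X, f (z x) = z (σ x) := by
  have hX : Infinite X := Cardinal.infinite_iff.mpr h₂
  have hcard : Cardinal.mk (D × X) = Cardinal.mk X := by
    rw [Cardinal.mk_prod, Cardinal.lift_id, Cardinal.lift_id]
    apply le_antisymm
    · calc Cardinal.mk D * Cardinal.mk X ≤ Cardinal.mk X * Cardinal.mk X :=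
            mul_le_mul_left h₁ _
        _ = Cardinal.mk X := Cardinal.mul_eq_self h₂
    · conv_lhs => rw [← one_mul (Cardinal.mk X)]
      exact mul_le_mul_left (Cardinal.one_le_iff_ne_zero.mpr
        (Cardinal.mk_ne_zero D)) _
  obtain ⟨e⟩ := Cardinal.eq.mp hcard.symm
  refine ⟨fun x => (e x).1, fun x => e.symm (f (e x).1, x), ?_, ?_, ?_, ?_⟩
  · intro d
    exact ⟨e.symm (d, Classical.arbitrary X), by simp⟩
  · intro d
    have : Set.MapsTo (fun x : X => e.symm (d, x)) Set.univ ((fun x => (e x).1) ⁻¹' {d}) := by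
      intro x _; simp
    have hinj : Set.InjOn (fun x : X => e.symm (d, x)) Set.univ := by
      intro a _ b _ h
      have := congrArg e h
      simpa using this
    exact Set.infinite_of_injOn_mapsTo hinj this Set.infinite_univ
  · intro a b h
    have h2 : e.symm (f (e a).1, a) = e.symm (f (e b).1, b) := h
    have := congrArg Prod.snd (congrArg e h2)
    simpa using this
  · intro x; simp
end

section
/- In the category of sets of cardinality at most λ (λ an infinite cardinal) with functions that fix a distinguished point, there exists a self-map u : X → X of a set X of cardinality λ such that for every set D of cardinality at most λ and every self-map f : D → D fixing the distinguished point, there is a surjection p : X → D with p ∘ u = f ∘ p. -/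
theorem stmt6 (lam : Cardinal.{u}) (hlam : Cardinal.aleph0 ≤ lam) :
    ∃ (X : Type u) (x₀ : X) (u : X → X), Cardinal.mk X = lam ∧ u x₀ = x₀ ∧
      ∀ (D : Type u) (d₀ : D) (f : D → D), Cardinal.mk D ≤ lam → f d₀ = d₀ →
        ∃ p : X → D, Function.Surjective p ∧ p x₀ = d₀ ∧
          ∀ x : X, p (u x) = f (p x) := by
  classical
  set S := lam.out with hS
  refine ⟨(S × ULift.{u} ℕ) ⊕ PUnit.{u+1}, Sum.inr PUnit.unit,
    (fun x => match x with
      | Sum.inl (s, n) => Sum.inl (s, ULift.up (n.down + 1))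
      | Sum.inr _ => Sum.inr PUnit.unit), ?_, rfl, ?_⟩
  · have h1 : Cardinal.mk ((S × ULift.{u} ℕ) ⊕ PUnit.{u+1}) =
        lam * Cardinal.aleph0 + 1 := by
      simp [hS, Cardinal.mk_out, Cardinal.mk_denumerable]
    rw [h1, Cardinal.mul_aleph0_eq hlam, Cardinal.add_one_of_aleph0_le hlam]
  · intro D d₀ f hD hf
    have hne : Nonempty D := ⟨d₀⟩
    obtain ⟨i⟩ : Nonempty (D ↪ S) := by
      rw [← Cardinal.le_def, Cardinal.mk_out]; exact hD
    have hq : Function.Surjective (Function.invFun i) :=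
      Function.invFun_surjective i.injective
    refine ⟨fun x => match x with
      | Sum.inl (s, n) => f^[n.down] (Function.invFun i s)
      | Sum.inr _ => d₀, ?_, rfl, ?_⟩
    · intro d
      obtain ⟨s, hs⟩ := hq d
      exact ⟨Sum.inl (s, ULift.up 0), hs⟩
    · rintro (⟨s, n⟩ | _)
      · simp [Function.iterate_succ_apply']
      · simp [hf]
end

section
/- Let E be a Banach space with a dense subset of cardinality λ (λ infinite). Then there exists a surjective bounded linear operator from ℓ¹(λ) onto E which maps the open unit ball of ℓ¹(λ) onto the open unit ball of E; in particular, every Banach space of density character at most λ is a quotient of ℓ¹(λ). -/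
/-!
Send the `i`-th unit vector of `ℓ¹(ι)` to the `i`-th member of a family that is dense in the
closed unit ball of `E` (such a family exists because `#D ≤ #ι`); this gives an operator `T` of
norm at most `1`. Every `z` is then within `δ‖z‖` of `T x` for some `x` with `‖x‖ = ‖z‖`.
Applying this to the successive errors, as in the proof of the open mapping theorem, gives a
preimage of any `y` of norm at most `‖y‖ / (1 - δ)`, which is `< 1` once `δ < 1 - ‖y‖`.
-/

open Metric Filter Topology Set
open scoped NNReal

section SuccessiveApproximation

variable {𝕜 F E : Type*} [NontriviallyNormedField 𝕜] [NormedAddCommGroup F] [NormedSpace 𝕜 F]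
  [NormedAddCommGroup E] [NormedSpace 𝕜 E]

theorem ContinuousLinearMap.surjective_of_ball_subset_range (T : F →L[𝕜] E) {r : ℝ} (hr : 0 < r)
    (hT : ball 0 r ⊆ range T) : Function.Surjective T := by
  have hint : (interior (LinearMap.range (T : F →ₗ[𝕜] E) : Set E)).Nonempty :=
    ⟨0, interior_maximal hT isOpen_ball (mem_ball_self hr)⟩
  exact LinearMap.range_eq_top.1 ((LinearMap.range _).eq_top_of_nonempty_interior' hint)

variable [CompleteSpace F]

theorem ContinuousLinearMap.exists_preimage_norm_le_of_approx (T : F →L[𝕜] E) {C : ℝ≥0} {δ : ℝ}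
    (hδ₀ : 0 ≤ δ) (hδ₁ : δ < 1) (happrox : ∀ z, ∃ x, ‖x‖ ≤ C * ‖z‖ ∧ ‖z - T x‖ ≤ δ * ‖z‖)
    (y : E) : ∃ x, ‖x‖ ≤ C * ‖y‖ / (1 - δ) ∧ T x = y := by
  choose g hg_norm hg_approx using happrox
  set z : ℕ → E := fun n => (fun w => w - T (g w))^[n] y
  have hz_succ (n : ℕ) : z (n + 1) = z n - T (g (z n)) := Function.iterate_succ_apply' _ n y
  have hz_norm (n : ℕ) : ‖z n‖ ≤ ‖y‖ * δ ^ n := by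
    induction n with
    | zero => simp [z]
    | succ n ih =>
      rw [hz_succ, pow_succ', ← mul_assoc, mul_comm ‖y‖, mul_assoc]
      exact (hg_approx _).trans (mul_le_mul_of_nonneg_left ih hδ₀)
  have hgz_norm (n : ℕ) : ‖g (z n)‖ ≤ C * ‖y‖ * δ ^ n :=
    (hg_norm _).trans <| by rw [mul_assoc]; exact mul_le_mul_of_nonneg_left (hz_norm n) C.2
  have hgeom := (hasSum_geometric_of_lt_one hδ₀ hδ₁).mul_left (C * ‖y‖)
  obtain ⟨x, hx⟩ : Summable (g ∘ z) := .of_norm_bounded hgeom.summable hgz_norm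
  refine ⟨x, ?_, ?_⟩
  · rw [div_eq_mul_inv, ← hx.tsum_eq]
    exact tsum_of_norm_bounded hgeom hgz_norm
  · have hpartial (n : ℕ) : ∑ k ∈ Finset.range n, T (g (z k)) = y - z n := by
      have hstep (k : ℕ) : T (g (z k)) = z k - z (k + 1) := by rw [hz_succ]; abel
      simp_rw [hstep]
      exact Finset.sum_range_sub' z n
    have hz_lim : Tendsto z atTop (𝓝 0) :=
      squeeze_zero_norm hz_norm <| by
        simpa using (tendsto_pow_atTop_nhds_zero_of_lt_one hδ₀ hδ₁).const_mul ‖y‖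
    refine tendsto_nhds_unique (T.hasSum hx).tendsto_sum_nat ?_
    simpa [hpartial] using tendsto_const_nhds.sub hz_lim

theorem ContinuousLinearMap.image_ball_eq_ball_of_approx (T : F →L[𝕜] E) (hT : ‖T‖ ≤ 1)
    (happrox : ∀ δ > 0, ∀ z, ∃ x, ‖x‖ ≤ ‖z‖ ∧ ‖z - T x‖ ≤ δ * ‖z‖) :
    T '' ball 0 1 = ball 0 1 := by
  ext y
  simp only [mem_image, mem_ball_zero_iff]
  constructor
  · rintro ⟨x, hx, rfl⟩
    exact (T.le_of_opNorm_le hT x).trans_lt (by rwa [one_mul])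
  · intro hy
    have hδ : 0 < (1 - ‖y‖) / 2 := by linarith
    obtain ⟨x, hx, hTx⟩ := T.exists_preimage_norm_le_of_approx (C := 1) hδ.le
      (by linarith [norm_nonneg y]) (by simpa using happrox _ hδ) y
    refine ⟨x, hx.trans_lt ?_, hTx⟩
    rw [NNReal.coe_one, one_mul, div_lt_one (by linarith [norm_nonneg y])]
    linarith

end SuccessiveApproximation

namespace lp

theorem hasSum_norm_one {ι 𝕜 : Type*} [NormedField 𝕜] (x : lp (fun _ : ι => 𝕜) 1) :
    HasSum (fun i => ‖x i‖) ‖x‖ := by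
  simpa using hasSum_norm (p := 1) (by norm_num) x

section TsumSMul

variable {ι 𝕜 E : Type*} [NontriviallyNormedField 𝕜] [NormedAddCommGroup E] [NormedSpace 𝕜 E]
  {f : ι → E}

theorem norm_apply_smul_le (hf : ∀ i, ‖f i‖ ≤ 1) (x : lp (fun _ : ι => 𝕜) 1) (i : ι) :
    ‖x i • f i‖ ≤ ‖x i‖ := by
  rw [norm_smul]
  exact mul_le_of_le_one_right (norm_nonneg _) (hf i)

variable [CompleteSpace E]

theorem summable_smul_of_norm_le_one (hf : ∀ i, ‖f i‖ ≤ 1) (x : lp (fun _ : ι => 𝕜) 1) :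
    Summable fun i => x i • f i :=
  .of_norm_bounded (hasSum_norm_one x).summable (norm_apply_smul_le hf x)

noncomputable def tsumSMul (f : ι → E) (hf : ∀ i, ‖f i‖ ≤ 1) : lp (fun _ : ι => 𝕜) 1 →L[𝕜] E :=
  LinearMap.mkContinuous
    { toFun x := ∑' i, x i • f i
      map_add' x y := by
        simp only [coeFn_add, Pi.add_apply, add_smul]
        exact (summable_smul_of_norm_le_one hf x).tsum_add (summable_smul_of_norm_le_one hf y)
      map_smul' c x := by
        simp only [coeFn_smul, Pi.smul_apply, smul_eq_mul, mul_smul, RingHom.id_apply]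
        exact (summable_smul_of_norm_le_one hf x).tsum_const_smul c }
    1 fun x => by
      rw [one_mul]
      exact tsum_of_norm_bounded (hasSum_norm_one x) (norm_apply_smul_le hf x)

variable (hf : ∀ i, ‖f i‖ ≤ 1)

theorem tsumSMul_apply (x : lp (fun _ : ι => 𝕜) 1) : tsumSMul f hf x = ∑' i, x i • f i := rfl

theorem norm_tsumSMul_le : ‖tsumSMul (𝕜 := 𝕜) f hf‖ ≤ 1 :=
  LinearMap.mkContinuous_norm_le _ zero_le_one _

theorem tsumSMul_single [DecidableEq ι] (i : ι) (a : 𝕜) :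
    tsumSMul f hf (lp.single 1 i a) = a • f i := by
  rw [tsumSMul_apply, tsum_eq_single i fun j hj => by simp [hj]]
  simp

end TsumSMul

theorem exists_approx_tsumSMul {ι 𝕜 E : Type*} [RCLike 𝕜] [NormedAddCommGroup E]
    [NormedSpace 𝕜 E] [CompleteSpace E] {f : ι → E} (hf : ∀ i, ‖f i‖ ≤ 1)
    (hdense : closedBall (0 : E) 1 ⊆ closure (range f)) {δ : ℝ} (hδ : 0 < δ) (z : E) :
    ∃ x : lp (fun _ : ι => 𝕜) 1, ‖x‖ ≤ ‖z‖ ∧ ‖z - tsumSMul f hf x‖ ≤ δ * ‖z‖ := by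
  classical
  rcases eq_or_ne z 0 with rfl | hz
  · exact ⟨0, by simp⟩
  have hz' : 0 < ‖z‖ := norm_pos_iff.2 hz
  set u : E := (‖z‖⁻¹ : 𝕜) • z
  have hu : u ∈ closedBall (0 : E) 1 := by
    simp [u, norm_smul, hz'.ne']
  obtain ⟨_, ⟨i, rfl⟩, hi⟩ := mem_closure_iff.1 (hdense hu) δ hδ
  refine ⟨lp.single 1 i (‖z‖ : 𝕜), by simp [lp.norm_single], ?_⟩
  have : z - (‖z‖ : 𝕜) • f i = (‖z‖ : 𝕜) • (u - f i) := by
    simp [u, smul_sub, smul_smul, hz'.ne']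
  rw [tsumSMul_single, this, norm_smul, RCLike.norm_ofReal, abs_of_pos hz', mul_comm,
    ← dist_eq_norm]
  exact mul_le_mul_of_nonneg_right hi.le hz'.le

end lp

theorem Set.Nonempty.exists_range_eq_of_mk_le {α ι : Type u} {s : Set α} (hs : s.Nonempty)
    (hcard : Cardinal.mk s ≤ Cardinal.mk ι) : ∃ f : ι → α, range f = s := by
  obtain ⟨e⟩ := hcard
  have : Nonempty s := hs.to_subtype
  obtain ⟨g, hg⟩ := Function.exists_surjective_iff.2 ⟨inferInstance, ⟨e⟩⟩
  exact ⟨(↑) ∘ g, by rw [range_comp, hg.range_eq, image_univ, Subtype.range_coe]⟩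

theorem Dense.exists_norm_le_one_closedBall_subset_closure_range {ι E : Type u}
    [NormedAddCommGroup E] [NormedSpace ℝ E] {D : Set E} (hD : Dense D)
    (hcard : Cardinal.mk D ≤ Cardinal.mk ι) :
    ∃ f : ι → E, (∀ i, ‖f i‖ ≤ 1) ∧ closedBall (0 : E) 1 ⊆ closure (range f) := by
  have hball : (ball (0 : E) 1 ∩ D).Nonempty :=
    hD.inter_open_nonempty _ isOpen_ball ⟨0, mem_ball_self one_pos⟩
  obtain ⟨f, hf⟩ := hball.exists_range_eq_of_mk_le
    ((Cardinal.mk_le_mk_of_subset inter_subset_right).trans hcard)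
  refine ⟨f, fun i => mem_closedBall_zero_iff.1 <|
    ball_subset_closedBall (hf ▸ mem_range_self i).1, ?_⟩
  rw [← closure_ball (0 : E) one_ne_zero, hf]
  exact closure_minimal (hD.open_subset_closure_inter isOpen_ball) isClosed_closure

theorem stmt13_general (ι : Type u)
    (E : Type u) [NormedAddCommGroup E] [NormedSpace ℝ E] [CompleteSpace E]
    (D : Set E) (hD : Dense D) (hcard : Cardinal.mk D ≤ Cardinal.mk ι) :
    ∃ T : lp (fun _ : ι => ℝ) 1 →L[ℝ] E,
      Function.Surjective T ∧
      T '' Metric.ball 0 1 = Metric.ball (0 : E) 1 := by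
  obtain ⟨f, hf, hdense⟩ := hD.exists_norm_le_one_closedBall_subset_closure_range hcard
  set T := lp.tsumSMul (𝕜 := ℝ) f hf
  have hball : T '' ball 0 1 = ball 0 1 :=
    T.image_ball_eq_ball_of_approx (lp.norm_tsumSMul_le hf) fun _ hδ =>
      lp.exists_approx_tsumSMul hf hdense hδ
  exact ⟨T, T.surjective_of_ball_subset_range one_pos (hball ▸ image_subset_range _ _), hball⟩

theorem stmt13 (ι : Type u) (hι : Cardinal.aleph0 ≤ Cardinal.mk ι)
    (E : Type u) [NormedAddCommGroup E] [NormedSpace ℝ E] [CompleteSpace E]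
    (D : Set E) (hD : Dense D) (hcard : Cardinal.mk D ≤ Cardinal.mk ι) :
    ∃ T : lp (fun _ : ι => ℝ) 1 →L[ℝ] E,
      Function.Surjective T ∧
      T '' Metric.ball 0 1 = Metric.ball (0 : E) 1 :=
  stmt13_general ι E D hD hcard
end

section
/- Let E be a separable Banach space and T : E → E a bounded linear operator with ‖T‖ ≤ 1. Then there exist a bounded linear operator U : ℓ¹ → ℓ¹ with ‖U‖ ≤ 1 (depending only on a universal construction, but for this statement existence suffices) and a surjective contractive linear operator π : ℓ¹ → E such that π ∘ U = T ∘ π. -/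
/-!
Let `(x n)` be a dense sequence in the open unit ball of `E` and let `π : ℓ¹ → E` send the basis
vector `e n` to `x n`; it is a contraction. Since the image of the closed unit ball under `π` is
dense in the open unit ball, the successive approximation argument of the open mapping theorem
shows that it contains the open unit ball. Hence `π` is onto, and each `T (x n)`, of norm `< 1`,
lifts to some `u n` of norm `≤ 1`. The contraction `U : e n ↦ u n` satisfies `π ∘ U = T ∘ π` on
basis vectors, hence everywhere.
-/

open Metric Filter Topology
open scoped lp

section L1Lift

variable {ι 𝕜 F : Type*} [NontriviallyNormedField 𝕜] [NormedAddCommGroup F] [NormedSpace 𝕜 F]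

lemma summable_norm_smul_of_norm_le_one (a : ℓ¹(ι, 𝕜)) {v : ι → F} (hv : ∀ i, ‖v i‖ ≤ 1) :
    Summable fun i => ‖a i • v i‖ := by
  refine .of_nonneg_of_le (fun i => norm_nonneg _) (fun i => ?_) (by simpa using a.2.summable)
  rw [norm_smul]
  exact mul_le_of_le_one_right (norm_nonneg _) (hv i)

variable [CompleteSpace F]

noncomputable def l1Lift (v : ι → F) (hv : ∀ i, ‖v i‖ ≤ 1) : ℓ¹(ι, 𝕜) →L[𝕜] F :=
  LinearMap.mkContinuous
    { toFun a := ∑' i, a i • v i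
      map_add' a b := by
        simp only [lp.coeFn_add, Pi.add_apply, add_smul]
        exact (summable_norm_smul_of_norm_le_one a hv).of_norm.tsum_add
          (summable_norm_smul_of_norm_le_one b hv).of_norm
      map_smul' c a := by
        simp only [lp.coeFn_smul, Pi.smul_apply, smul_eq_mul, mul_smul, RingHom.id_apply]
        exact (summable_norm_smul_of_norm_le_one a hv).of_norm.tsum_const_smul c }
    1 fun a => by
      have hs := summable_norm_smul_of_norm_le_one a hv
      calc ‖∑' i, a i • v i‖ ≤ ∑' i, ‖a i • v i‖ := norm_tsum_le_tsum_norm hs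
        _ ≤ ∑' i, ‖a i‖ := hs.tsum_le_tsum (fun i => by
            rw [norm_smul]; exact mul_le_of_le_one_right (norm_nonneg _) (hv i))
            (by simpa using a.2.summable)
        _ = 1 * ‖a‖ := by simpa using (lp.norm_eq_tsum_rpow (by norm_num) a).symm

lemma l1Lift_apply (v : ι → F) (hv : ∀ i, ‖v i‖ ≤ 1) (a : ℓ¹(ι, 𝕜)) :
    l1Lift v hv a = ∑' i, a i • v i := rfl

lemma norm_l1Lift_le (v : ι → F) (hv : ∀ i, ‖v i‖ ≤ 1) : ‖(l1Lift v hv : ℓ¹(ι, 𝕜) →L[𝕜] F)‖ ≤ 1 :=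
  LinearMap.mkContinuous_norm_le _ zero_le_one _

@[simp]
lemma l1Lift_single [DecidableEq ι] (v : ι → F) (hv : ∀ i, ‖v i‖ ≤ 1) (i : ι) (c : 𝕜) :
    l1Lift v hv (lp.single 1 i c) = c • v i := by
  rw [l1Lift_apply, tsum_eq_single i fun j hj => by simp [hj]]
  simp

end L1Lift

theorem Set.exists_seq_mem_subset_closure_range {X : Type*} [PseudoMetricSpace X]
    [TopologicalSpace.SeparableSpace X] {s : Set X} (hs : s.Nonempty) :
    ∃ x : ℕ → X, (∀ n, x n ∈ s) ∧ s ⊆ closure (Set.range x) := by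
  have := hs.to_subtype
  refine ⟨fun n => TopologicalSpace.denseSeq s n, fun n => (TopologicalSpace.denseSeq s n).2, ?_⟩
  rw [Set.range_comp']
  exact Subtype.dense_iff.1 (TopologicalSpace.denseRange_denseSeq _)

namespace ContinuousLinearMap

theorem surjective_of_range_mem_nhds {𝕜 E F : Type*} [NontriviallyNormedField 𝕜]
    [AddCommGroup E] [Module 𝕜 E] [TopologicalSpace E]
    [NormedAddCommGroup F] [NormedSpace 𝕜 F] (f : E →L[𝕜] F)
    (h : Set.range f ∈ 𝓝 0) : Function.Surjective f :=
  LinearMap.range_eq_top.1 <| Submodule.eq_top_of_nonempty_interior' _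
    ⟨0, mem_interior_iff_mem_nhds.2 (by rwa [LinearMap.coe_range, ContinuousLinearMap.coe_coe])⟩

section Approximation

variable {𝕜 E F : Type*} [NontriviallyNormedField 𝕜] [NormedAddCommGroup E] [NormedSpace 𝕜 E]
  [NormedAddCommGroup F] [NormedSpace 𝕜 F] [CompleteSpace E]

theorem exists_preimage_norm_le_of_approx_s14 (f : E →L[𝕜] F) {a θ : ℝ} (hθ₀ : 0 ≤ θ) (hθ₁ : θ < 1)
    (happrox : ∀ z, ∃ x, ‖x‖ ≤ a * ‖z‖ ∧ ‖z - f x‖ ≤ θ * ‖z‖) (y : F) :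
    ∃ x, f x = y ∧ ‖x‖ ≤ a / (1 - θ) * ‖y‖ := by
  rcases eq_or_ne y 0 with rfl | hy
  · exact ⟨0, by simp⟩
  choose g hg_norm hg_approx using happrox
  have ha : 0 ≤ a :=
    nonneg_of_mul_nonneg_left ((norm_nonneg _).trans (hg_norm y)) (norm_pos_iff.2 hy)
  -- `r z` is the error left by the approximate preimage `g z`; each iteration shrinks it by `θ`.
  set r : F → F := fun z => z - f (g z)
  have hr : ∀ n, ‖r^[n] y‖ ≤ θ ^ n * ‖y‖ := by
    intro n
    induction n with
    | zero => simp
    | succ n ih =>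
      rw [Function.iterate_succ_apply', pow_succ', mul_assoc]
      exact (hg_approx _).trans (mul_le_mul_of_nonneg_left ih hθ₀)
  set u : ℕ → E := fun n => g (r^[n] y)
  have hu : ∀ n, ‖u n‖ ≤ a * ‖y‖ * θ ^ n := fun n =>
    calc ‖u n‖ ≤ a * ‖r^[n] y‖ := hg_norm _
      _ ≤ a * (θ ^ n * ‖y‖) := mul_le_mul_of_nonneg_left (hr n) ha
      _ = a * ‖y‖ * θ ^ n := by ring
  have hgeom : HasSum (fun n => a * ‖y‖ * θ ^ n) (a * ‖y‖ * (1 - θ)⁻¹) :=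
    (hasSum_geometric_of_lt_one hθ₀ hθ₁).mul_left _
  have hsum : Summable fun n => ‖u n‖ := .of_nonneg_of_le (fun _ => norm_nonneg _) hu hgeom.summable
  have hpartial : ∀ n, f (∑ i ∈ Finset.range n, u i) = y - r^[n] y := by
    intro n
    induction n with
    | zero => simp
    | succ n ih => rw [Finset.sum_range_succ, map_add, ih, Function.iterate_succ_apply', sub_add]
  have hres : Tendsto (fun n => r^[n] y) atTop (𝓝 0) :=
    squeeze_zero_norm hr (by simpa using
      (tendsto_pow_atTop_nhds_zero_of_lt_one hθ₀ hθ₁).mul_const ‖y‖)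
  refine ⟨∑' n, u n, ?_, ?_⟩
  · refine tendsto_nhds_unique
      ((f.continuous.tendsto _).comp hsum.of_norm.hasSum.tendsto_sum_nat) ?_
    simpa [Function.comp_def, hpartial] using (tendsto_const_nhds (x := y)).sub hres
  · calc ‖∑' n, u n‖ ≤ ∑' n, ‖u n‖ := norm_tsum_le_tsum_norm hsum
      _ ≤ a * ‖y‖ * (1 - θ)⁻¹ := (hsum.tsum_le_tsum hu hgeom.summable).trans_eq hgeom.tsum_eq
      _ = a / (1 - θ) * ‖y‖ := by ring

end Approximation

section Real

variable {E F : Type*} [NormedAddCommGroup E] [NormedSpace ℝ E]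
  [NormedAddCommGroup F] [NormedSpace ℝ F]

theorem exists_approx_preimage_of_ball_subset_closure (f : E →L[ℝ] F)
    (h : ball (0 : F) 1 ⊆ closure (f '' closedBall 0 1)) {a θ : ℝ} (ha : 1 < a) (hθ : 0 < θ)
    (z : F) : ∃ x, ‖x‖ ≤ a * ‖z‖ ∧ ‖z - f x‖ ≤ θ * ‖z‖ := by
  rcases eq_or_ne z 0 with rfl | hz
  · exact ⟨0, by simp⟩
  set c := a * ‖z‖ with hc_def
  have hc : 0 < c := mul_pos (by linarith) (norm_pos_iff.2 hz)
  have hzc : c⁻¹ • z ∈ ball (0 : F) 1 := by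
    rw [mem_ball_zero_iff, norm_smul, norm_inv, Real.norm_of_nonneg hc.le, inv_mul_lt_one₀ hc]
    exact lt_mul_left (norm_pos_iff.2 hz) ha
  obtain ⟨_, ⟨x, hx, rfl⟩, hdist⟩ :=
    Metric.mem_closure_iff.1 (h hzc) (θ / a) (div_pos hθ (by linarith))
  refine ⟨c • x, ?_, ?_⟩
  · rw [norm_smul, Real.norm_of_nonneg hc.le]
    exact mul_le_of_le_one_right hc.le (mem_closedBall_zero_iff.1 hx)
  · have hsplit : z - f (c • x) = c • (c⁻¹ • z - f x) := by
      rw [smul_sub, smul_inv_smul₀ hc.ne', map_smul]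
    calc ‖z - f (c • x)‖ = c * dist (c⁻¹ • z) (f x) := by
          rw [hsplit, norm_smul, Real.norm_of_nonneg hc.le, dist_eq_norm]
      _ ≤ c * (θ / a) := mul_le_mul_of_nonneg_left hdist.le hc.le
      _ = θ * ‖z‖ := by rw [hc_def]; field_simp

theorem ball_subset_image_closedBall_of_ball_subset_closure [CompleteSpace E] (f : E →L[ℝ] F)
    (h : ball (0 : F) 1 ⊆ closure (f '' closedBall 0 1)) :
    ball (0 : F) 1 ⊆ f '' closedBall 0 1 := by
  intro y hy
  rw [mem_ball_zero_iff] at hy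
  rcases eq_or_ne y 0 with rfl | hy₀
  · exact ⟨0, by simp⟩
  replace hy₀ : 0 < ‖y‖ := norm_pos_iff.2 hy₀
  obtain ⟨t, hyt, ht₁⟩ := exists_between hy
  -- With `a = t / ‖y‖` and `θ = 1 - t`, the bound `a / (1 - θ) * ‖y‖` is exactly `1`.
  obtain ⟨x, hfx, hx⟩ := f.exists_preimage_norm_le_of_approx_s14 (by linarith) (by linarith)
    (f.exists_approx_preimage_of_ball_subset_closure h ((one_lt_div hy₀).2 hyt)
      (sub_pos.2 ht₁)) y
  refine ⟨x, mem_closedBall_zero_iff.2 (hx.trans_eq ?_), hfx⟩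
  have ht₀ : 0 < t := hy₀.trans hyt
  rw [sub_sub_cancel]
  field_simp

end Real

end ContinuousLinearMap

theorem stmt14 (E : Type*) [NormedAddCommGroup E] [NormedSpace ℝ E]
    [CompleteSpace E] [TopologicalSpace.SeparableSpace E]
    (T : E →L[ℝ] E) (hT : ‖T‖ ≤ 1) :
    ∃ U : lp (fun _ : ℕ => ℝ) 1 →L[ℝ] lp (fun _ : ℕ => ℝ) 1, ‖U‖ ≤ 1 ∧
      ∃ π : lp (fun _ : ℕ => ℝ) 1 →L[ℝ] E,
        Function.Surjective π ∧ ‖π‖ ≤ 1 ∧ π.comp U = T.comp π := by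
  obtain ⟨x, hx, hdense⟩ :=
    Set.exists_seq_mem_subset_closure_range (nonempty_ball.2 one_pos : (ball (0 : E) 1).Nonempty)
  set π : ℓ¹(ℕ, ℝ) →L[ℝ] E := l1Lift x fun n => (mem_ball_zero_iff.1 (hx n)).le
  have hball : ball (0 : E) 1 ⊆ π '' closedBall 0 1 := by
    refine π.ball_subset_image_closedBall_of_ball_subset_closure (hdense.trans (closure_mono ?_))
    rintro _ ⟨n, rfl⟩
    exact ⟨lp.single 1 n 1, by simp [lp.norm_single], by simp [π]⟩
  have hTx : ∀ n, T (x n) ∈ ball (0 : E) 1 := fun n =>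
    mem_ball_zero_iff.2 ((T.le_of_opNorm_le hT _).trans_lt (by simpa using hx n))
  choose u hu hπu using fun n => hball (hTx n)
  refine ⟨l1Lift u fun n => mem_closedBall_zero_iff.1 (hu n), norm_l1Lift_le _ _, π,
    π.surjective_of_range_mem_nhds
      (mem_of_superset (ball_mem_nhds 0 one_pos) (hball.trans (Set.image_subset_range _ _))),
    norm_l1Lift_le _ _, ?_⟩
  refine lp.ext_continuousLinearMap ENNReal.one_ne_top fun n => ?_
  ext
  simp [π, hπu]
end
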